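/- Let σ : ℕ → ℚ satisfy σ 0 = 0, σ 1 = 1/2 and, for every n ≥ 2, σ n = (1/2)·Σ_{l=1}^{n-1} σ l · σ (n-l); let κ : ℕ → ℚ satisfy κ 0 = 1 and, for every n ≥ 1, κ n = Σ_{m=1}^{n} κ (n-m) · σ m. Then for every n ≥ 0, κ n = binomial(2n, n) / 4ⁿ (the coefficients of 1/√(1-x)). -/

import Mathlib

/-!
With `S = ∑ σ n Xⁿ` and `K = ∑ κ n Xⁿ`, the recursions say `S² + X = 2S` and `K (1 - S) = 1`.
The series `C = ∑ binomial(2n, n)/4ⁿ Xⁿ` satisfies `2 (1 - X) C' = C`, hence `((1 - X) C²)' = 0`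
and `(1 - X) C² = 1`. Then `1 - (1 - X) C` solves the quadratic equation for `S`, whose solution
with zero constant term is unique, so `1 - S = (1 - X) C` and `K = ((1 - X) C)⁻¹ = C`.
-/

open PowerSeries

noncomputable def centralBinomSeries : ℚ⟦X⟧ := mk fun n => (n.centralBinom : ℚ) / 4 ^ n

namespace centralBinomSeries

lemma coeff_succ_mul (n : ℕ) :
    coeff (n + 1) centralBinomSeries * (2 * n + 2) = coeff n centralBinomSeries * (2 * n + 1) := by
  have h : ((n : ℚ) + 1) * (n + 1).centralBinom = 2 * (2 * n + 1) * n.centralBinom :=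
    mod_cast n.succ_mul_centralBinom_succ
  simp only [centralBinomSeries, coeff_mk, pow_succ]
  field_simp
  linear_combination 2 * h

lemma two_mul_one_sub_X_mul_derivative :
    2 * (1 - X) * d⁄dX ℚ centralBinomSeries = centralBinomSeries := by
  ext n
  rw [← map_ofNat C 2, mul_assoc, coeff_C_mul, sub_mul, one_mul, map_sub]
  rcases n with _ | n
  · norm_num [coeff_derivative, centralBinomSeries, Nat.centralBinom]
  · have h := coeff_succ_mul (n + 1)
    simp only [coeff_derivative, coeff_succ_X_mul]
    push_cast at h ⊢
    linear_combination h

theorem one_sub_X_mul_sq : (1 - X) * centralBinomSeries ^ 2 = 1 := by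
  refine derivative.ext ?_ (by simp [centralBinomSeries])
  have h := two_mul_one_sub_X_mul_derivative
  simp only [Derivation.leibniz, derivative_pow, derivative_one, map_sub, derivative_X, smul_eq_mul]
  linear_combination centralBinomSeries * h

end centralBinomSeries

theorem PowerSeries.eq_of_sq_add_X_eq_two_mul {R : Type*} [CommRing R] [IsDomain R]
    [NeZero (2 : R)] {S T : R⟦X⟧} (hS : S ^ 2 + X = 2 * S) (hT : T ^ 2 + X = 2 * T)
    (hS0 : constantCoeff S = 0) (hT0 : constantCoeff T = 0) : S = T := by
  have hne : S + T - 2 ≠ 0 := fun h => by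
    have h0 := congrArg constantCoeff h
    rw [map_sub, map_add, hS0, hT0, map_ofNat constantCoeff 2, map_zero, zero_add, zero_sub,
      neg_eq_zero] at h0
    exact NeZero.ne 2 h0
  have h : (S - T) * (S + T - 2) = 0 := by linear_combination hS - hT
  exact sub_eq_zero.mp ((mul_eq_zero.mp h).resolve_right hne)

lemma mk_sq_add_X_eq_two_mul {σ : ℕ → ℚ} (hσ0 : σ 0 = 0) (hσ1 : σ 1 = 1/2)
    (hσrec : ∀ n : ℕ, 2 ≤ n → σ n = (1/2) * ∑ l ∈ Finset.Ico 1 n, σ l * σ (n - l)) :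
    mk σ ^ 2 + X = 2 * mk σ := by
  ext n
  rw [← map_ofNat C 2, coeff_C_mul, map_add, sq, coeff_mul,
    Finset.Nat.sum_antidiagonal_eq_sum_range_succ (fun i j => coeff i (mk σ) * coeff j (mk σ))]
  simp only [coeff_mk, coeff_X]
  match n with
  | 0 => simp [hσ0]
  | 1 => simp [Finset.sum_range_succ, hσ0, hσ1]
  | n + 2 =>
    rw [Finset.sum_range_succ, Finset.sum_range_eq_add_Ico _ (by omega), hσrec (n + 2) (by omega)]
    simp [hσ0]

lemma mk_mul_one_sub_mk_eq_one {σ κ : ℕ → ℚ} (hσ0 : σ 0 = 0) (hκ0 : κ 0 = 1)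
    (hκrec : ∀ n : ℕ, 1 ≤ n → κ n = ∑ m ∈ Finset.Icc 1 n, κ (n - m) * σ m) :
    mk κ * (1 - mk σ) = 1 := by
  rw [mul_sub, mul_one, sub_eq_iff_eq_add]
  ext n
  rw [map_add, mul_comm, coeff_mul,
    Finset.Nat.sum_antidiagonal_eq_sum_range_succ (fun i j => coeff i (mk σ) * coeff j (mk κ))]
  simp only [coeff_mk, coeff_one]
  rcases n with _ | n
  · simp [hσ0, hκ0]
  · rw [hκrec (n + 1) (by omega), Finset.range_eq_Ico, Finset.sum_eq_sum_Ico_succ_bot (by omega),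
      hσ0, if_neg n.succ_ne_zero]
    simp only [zero_mul, zero_add, Nat.succ_eq_add_one, Finset.Ico_add_one_right_eq_Icc]
    exact Finset.sum_congr rfl fun m _ => mul_comm _ _

theorem kappa_eq_central_binom (σ κ : ℕ → ℚ)
    (hσ0 : σ 0 = 0) (hσ1 : σ 1 = 1/2)
    (hσrec : ∀ n : ℕ, 2 ≤ n → σ n = (1/2) * ∑ l ∈ Finset.Ico 1 n, σ l * σ (n - l))
    (hκ0 : κ 0 = 1)
    (hκrec : ∀ n : ℕ, 1 ≤ n → κ n = ∑ m ∈ Finset.Icc 1 n, κ (n - m) * σ m) :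
    ∀ n : ℕ, κ n = (Nat.choose (2 * n) n : ℚ) / 4 ^ n := by
  have hC := centralBinomSeries.one_sub_X_mul_sq
  have hσ : mk σ = 1 - (1 - X) * centralBinomSeries := by
    refine eq_of_sq_add_X_eq_two_mul (mk_sq_add_X_eq_two_mul hσ0 hσ1 hσrec) ?_ (by simp [hσ0]) ?_
    · linear_combination (1 - X) * hC
    · simp [centralBinomSeries]
  have hκ : mk κ = centralBinomSeries := by
    refine left_inv_eq_right_inv (mk_mul_one_sub_mk_eq_one hσ0 hκ0 hκrec) ?_
    rw [hσ]
    linear_combination hC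
  intro n
  simpa [centralBinomSeries, Nat.centralBinom] using congrArg (coeff n) hκ
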